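/- Let F : ℝ → ℂ be twice differentiable and let a(t) = |F(t)|. At every point t where F(t) ≠ 0, the amplitude a is twice differentiable and satisfies a''(t)/a(t) = Re(F''(t)·conj(F(t)))/|F(t)|² + (Im(F'(t)·conj(F(t))))²/|F(t)|⁴. -/

import Mathlib

open Real Filter Topology

open scoped InnerProductSpace ComplexConjugate

/-! The amplitude `‖F‖` is differentiated twice by the quotient rule, which gives
`a''/a = ⟪F, F''⟫/‖F‖² + (‖F‖²‖F'‖² - ⟪F, F'⟫²)/‖F‖⁴` in any real inner product space.
In `ℂ` the real inner product is `⟪z, w⟫ = Re(w z̄)`, and the Cauchy–Schwarz defect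
`‖z‖²‖w‖² - ⟪z, w⟫²` is `Im(w z̄)²`, since `|w z̄|² = Re(w z̄)² + Im(w z̄)²`. -/

section RealInnerProductSpace

variable {E : Type*} [NormedAddCommGroup E] [InnerProductSpace ℝ E]

theorem HasDerivAt.norm_of_ne_zero {f : ℝ → E} {f' : E} {t : ℝ}
    (hf : HasDerivAt f f' t) (h0 : f t ≠ 0) :
    HasDerivAt (fun s => ‖f s‖) (⟪f t, f'⟫_ℝ / ‖f t‖) t := by
  have hsqrt := hf.norm_sq.sqrt (by positivity)
  simp only [sqrt_sq (norm_nonneg _)] at hsqrt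
  convert hsqrt using 1
  field_simp

theorem hasDerivAt_deriv_norm_of_ne_zero {f g : ℝ → E} {f'' : E} {t : ℝ}
    (hf : ∀ᶠ s in 𝓝 t, HasDerivAt f (g s) s) (hg : HasDerivAt g f'' t) (h0 : f t ≠ 0) :
    HasDerivAt (deriv fun s => ‖f s‖)
      (⟪f t, f''⟫_ℝ / ‖f t‖ + (‖f t‖ ^ 2 * ‖g t‖ ^ 2 - ⟪f t, g t⟫_ℝ ^ 2) / ‖f t‖ ^ 3) t := by
  have hf_t : HasDerivAt f (g t) t := hf.self_of_nhds
  have hderiv : (deriv fun s => ‖f s‖) =ᶠ[𝓝 t] fun s => ⟪f s, g s⟫_ℝ / ‖f s‖ := by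
    filter_upwards [hf, hf_t.continuousAt.eventually_ne h0] with s hs hs0
    exact (hs.norm_of_ne_zero hs0).deriv
  have hnorm : ‖f t‖ ≠ 0 := norm_ne_zero_iff.mpr h0
  have hquot := (hf_t.inner ℝ hg).div (hf_t.norm_of_ne_zero h0) hnorm
  refine (hquot.congr_of_eventuallyEq hderiv).congr_deriv ?_
  rw [real_inner_self_eq_norm_sq]
  field_simp
  ring

end RealInnerProductSpace

theorem Complex.norm_sq_mul_norm_sq_sub_inner_sq (z w : ℂ) :
    ‖z‖ ^ 2 * ‖w‖ ^ 2 - ⟪z, w⟫_ℝ ^ 2 = (w * conj z).im ^ 2 := by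
  have h := Complex.normSq_apply (w * conj z)
  rw [Complex.normSq_mul, Complex.normSq_conj, Complex.normSq_eq_norm_sq,
    Complex.normSq_eq_norm_sq] at h
  rw [Complex.inner]
  linear_combination h

theorem chu_mei_quotient_formula
    (F : ℝ → ℂ) (hF : ∀ t, DifferentiableAt ℝ F t)
    (hF' : ∀ t, DifferentiableAt ℝ (deriv F) t)
    (a : ℝ → ℝ) (ha : a = fun t => ‖F t‖)
    (t : ℝ) (ht : F t ≠ 0) :
    DifferentiableAt ℝ a t ∧ DifferentiableAt ℝ (deriv a) t ∧
    deriv (deriv a) t / a t =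
      (deriv (deriv F) t * (starRingEnd ℂ) (F t)).re / ‖F t‖ ^ 2 +
      ((deriv F t * (starRingEnd ℂ) (F t)).im) ^ 2 / ‖F t‖ ^ 4 := by
  subst ha
  have ha'' := hasDerivAt_deriv_norm_of_ne_zero
    (.of_forall fun s => (hF s).hasDerivAt) (hF' t).hasDerivAt ht
  refine ⟨(hF t).norm ℝ ht, ha''.differentiableAt, ?_⟩
  have hnorm : ‖F t‖ ≠ 0 := norm_ne_zero_iff.mpr ht
  rw [ha''.deriv, Complex.norm_sq_mul_norm_sq_sub_inner_sq, Complex.inner]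
  field_simp
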